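/- For the 2-lag factorizable Gibbs distribution π, the conditional distribution of the past given the future depends only on the two next values: for every t with 1 ≤ t ≤ T−2 and all z ∈ E^T, π(z₁,…,z_t ∣ z_{t+1},…,z_T) := π(z) / Σ_{u₁,…,u_t ∈ E} π(u₁,…,u_t, z_{t+1},…,z_T) equals exp U_t*(z₁,…,z_t; z_{t+1}, z_{t+2}) / Σ_{u₁,…,u_t ∈ E} exp U_t*(u₁,…,u_t; z_{t+1}, z_{t+2}), where U_t*(z₁,…,z_t; z_{t+1}, z_{t+2}) = U_t(z₁,…,z_t) + Ψ_{1,t}(z_t, z_{t+1}) + Ψ_{2,t−1}(z_{t−1}, z_{t+1}) + Ψ_{2,t}(z_t, z_{t+2}); in particular it depends on (z_{t+1},…,z_T) only through (z_{t+1}, z_{t+2}). -/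

import Mathlib

/-!
Extend a configuration to a sequence `ξ : ℕ → E` and group the terms of the energy by their
leftmost site: the terms whose leftmost site lies before `t` add up to exactly `U_t*`, which
sees the future only through `ξ t` and `ξ (t + 1)`, and the remaining terms involve only sites
`≥ t`. Replacing the past of `z` therefore leaves the second part unchanged, so its exponential
is a common factor of numerator and denominator, as is `C⁻¹`.
-/

lemma mul_exp_add_div_sum_mul_exp_add {ι : Type*} [Fintype ι] {c : ℝ} (hc : c ≠ 0)
    (f : ι → ℝ) (r : ℝ) (i : ι) :
    c * Real.exp (f i + r) / ∑ j, c * Real.exp (f j + r)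
      = Real.exp (f i) / ∑ j, Real.exp (f j) := by
  simp only [Real.exp_add, ← Finset.mul_sum, ← Finset.sum_mul]
  rw [mul_div_mul_left _ _ hc, mul_div_mul_right _ _ (Real.exp_ne_zero r)]

namespace TwoLagGibbs

open Finset

variable {E : Type*} (θ : ℕ → E → ℝ) (Ψ₁ Ψ₂ : ℕ → E → E → ℝ)

/-- `chainEnergy ξ 0 n` is `U_n` evaluated at `ξ 0, …, ξ (n - 1)`; `chainEnergy ξ a n` keeps only
its terms whose leftmost site is at least `a`. -/
def chainEnergy (ξ : ℕ → E) (a n : ℕ) : ℝ :=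
  (∑ s ∈ Ico a n, θ (s + 1) (ξ s)) + (∑ s ∈ Ico a (n - 1), Ψ₁ (s + 1) (ξ s) (ξ (s + 1)))
    + ∑ s ∈ Ico a (n - 2), Ψ₂ (s + 1) (ξ s) (ξ (s + 2))

def siteEnergy (ξ : ℕ → E) (s : ℕ) : ℝ :=
  θ (s + 1) (ξ s) + Ψ₁ (s + 1) (ξ s) (ξ (s + 1)) + Ψ₂ (s + 1) (ξ s) (ξ (s + 2))

lemma chainEnergy_congr {ξ η : ℕ → E} {a : ℕ} (h : ∀ s, a ≤ s → ξ s = η s) (n : ℕ) :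
    chainEnergy θ Ψ₁ Ψ₂ ξ a n = chainEnergy θ Ψ₁ Ψ₂ η a n := by
  unfold chainEnergy
  congr 1
  · congr 1
    · exact sum_congr rfl fun s hs => by rw [h s (mem_Ico.mp hs).1]
    · refine sum_congr rfl fun s hs => ?_
      rw [h s (mem_Ico.mp hs).1, h (s + 1) (by have := (mem_Ico.mp hs).1; omega)]
  · refine sum_congr rfl fun s hs => ?_
    rw [h s (mem_Ico.mp hs).1, h (s + 2) (by have := (mem_Ico.mp hs).1; omega)]

lemma chainEnergy_zero_eq_sum_siteEnergy_add (ξ : ℕ → E) {t n : ℕ} (h : t + 2 ≤ n) :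
    chainEnergy θ Ψ₁ Ψ₂ ξ 0 n
      = ∑ s ∈ range t, siteEnergy θ Ψ₁ Ψ₂ ξ s + chainEnergy θ Ψ₁ Ψ₂ ξ t n := by
  simp only [chainEnergy, siteEnergy, ← range_eq_Ico, sum_add_distrib,
    ← sum_range_add_sum_Ico _ (show t ≤ n by omega),
    ← sum_range_add_sum_Ico _ (show t ≤ n - 1 by omega),
    ← sum_range_add_sum_Ico _ (show t ≤ n - 2 by omega)]
  ring

/-- At `t = 1` the term `Ψ₂ (t - 1) (ξ (t - 2)) (ξ t)` has no counterpart on the right, hence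
`hΨ₂0`. -/
lemma chainEnergy_zero_add_boundary_eq_sum_siteEnergy (hΨ₂0 : ∀ u v, Ψ₂ 0 u v = 0)
    (ξ : ℕ → E) {t : ℕ} (ht : 1 ≤ t) :
    chainEnergy θ Ψ₁ Ψ₂ ξ 0 t + Ψ₁ t (ξ (t - 1)) (ξ t) + Ψ₂ (t - 1) (ξ (t - 2)) (ξ t)
        + Ψ₂ t (ξ (t - 1)) (ξ (t + 1))
      = ∑ s ∈ range t, siteEnergy θ Ψ₁ Ψ₂ ξ s := by
  obtain ⟨m, rfl⟩ : ∃ m, t = m + 1 := ⟨t - 1, by omega⟩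
  simp only [chainEnergy, siteEnergy, ← range_eq_Ico, sum_add_distrib, Nat.add_sub_cancel,
    show m + 1 - 2 = m - 1 by omega, sum_range_succ _ m]
  rcases m with _ | k
  · simp [hΨ₂0]
  · simp only [Nat.add_sub_cancel, sum_range_succ _ k]
    ring

lemma sum_fin_eq_chainEnergy {n : ℕ} (w : Fin n → E) (ξ : ℕ → E)
    (hξ : ∀ k (hk : k < n), ξ k = w ⟨k, hk⟩) :
    ((∑ s : Fin n, θ (s.1 + 1) (w s))
      + (∑ s : Fin (n - 1), Ψ₁ (s.1 + 1) (w ⟨s.1, s.2.trans_le (n.sub_le 1)⟩)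
          (w ⟨s.1 + 1, Nat.add_lt_of_lt_sub s.2⟩))
      + ∑ s : Fin (n - 2), Ψ₂ (s.1 + 1) (w ⟨s.1, s.2.trans_le (n.sub_le 2)⟩)
          (w ⟨s.1 + 2, Nat.add_lt_of_lt_sub s.2⟩))
    = chainEnergy θ Ψ₁ Ψ₂ ξ 0 n := by
  simp only [chainEnergy, ← range_eq_Ico, ← Fin.sum_univ_eq_sum_range]
  congr 1
  · congr 1
    · exact sum_congr rfl fun s _ => by rw [hξ s s.2]
    · exact sum_congr rfl fun s _ => by
        rw [hξ s (by have := s.2; omega), hξ (s + 1) (by have := s.2; omega)]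
  · exact sum_congr rfl fun s _ => by
      rw [hξ s (by have := s.2; omega), hξ (s + 2) (by have := s.2; omega)]

lemma exists_energy_splice_eq_add {T t : ℕ} (ht : t + 2 ≤ T) (V : (Fin T → E) → ℝ)
    (W : (Fin t → E) → E → E → ℝ)
    (hV : ∀ (w : Fin T → E) (ξ : ℕ → E), (∀ k (hk : k < T), ξ k = w ⟨k, hk⟩) →
      V w = chainEnergy θ Ψ₁ Ψ₂ ξ 0 T)
    (hW : ∀ (u : Fin t → E) (ξ : ℕ → E), (∀ k (hk : k < t), ξ k = u ⟨k, hk⟩) →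
      W u (ξ t) (ξ (t + 1)) = ∑ s ∈ range t, siteEnergy θ Ψ₁ Ψ₂ ξ s)
    (z : Fin T → E) :
    ∃ R, ∀ u : Fin t → E,
      V (fun j => if hj : j.1 < t then u ⟨j.1, hj⟩ else z j)
        = W u (z ⟨t, by omega⟩) (z ⟨t + 1, by omega⟩) + R := by
  let ζ : ℕ → E := fun n => if h : n < T then z ⟨n, h⟩ else z ⟨t, by omega⟩
  refine ⟨chainEnergy θ Ψ₁ Ψ₂ ζ t T, fun u => ?_⟩
  let ξ : ℕ → E := fun n => if h : n < t then u ⟨n, h⟩ else ζ n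
  have hξζ : ∀ s, t ≤ s → ξ s = ζ s := fun s hs => dif_neg (by omega)
  have hfuture : ∀ k (hk : t ≤ k) (hkT : k < T), ξ k = z ⟨k, hkT⟩ := fun k hk hkT => by
    rw [hξζ k hk]; exact dif_pos hkT
  have hsplice : ∀ k (hk : k < T),
      ξ k = (fun j : Fin T => if hj : j.1 < t then u ⟨j.1, hj⟩ else z j) ⟨k, hk⟩ := by
    intro k hk
    by_cases hkt : k < t
    · simp [ξ, hkt]
    · simp only [hkt, dite_false]; exact hfuture k (by omega) hk
  rw [hV _ ξ hsplice, chainEnergy_zero_eq_sum_siteEnergy_add θ Ψ₁ Ψ₂ ξ ht,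
    ← hW u ξ (fun k hk => dif_pos hk), hfuture t le_rfl (by omega),
    hfuture (t + 1) (by omega) (by omega), chainEnergy_congr θ Ψ₁ Ψ₂ hξζ]

end TwoLagGibbs

open TwoLagGibbs in
/-- For the 2-lag factorizable Gibbs distribution `π` with energy
`U_T(z) = ∑_{s=1}^{T} θ_s(z_s) + ∑_{s=1}^{T-1} Ψ_{1,s}(z_s,z_{s+1})
  + ∑_{s=1}^{T-2} Ψ_{2,s}(z_s,z_{s+2})`,
the conditional distribution of the past given the future depends only on the two next
values: for `1 ≤ t ≤ T-2`,
`π(z₁,…,z_t ∣ z_{t+1},…,z_T) = exp U_t*(z₁,…,z_t; z_{t+1},z_{t+2})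
  / ∑_{u₁,…,u_t} exp U_t*(u₁,…,u_t; z_{t+1},z_{t+2})`, where
`U_t*(z₁,…,z_t; a, b) = U_t(z₁,…,z_t) + Ψ_{1,t}(z_t,a) + Ψ_{2,t-1}(z_{t-1},a) + Ψ_{2,t}(z_t,b)`,
with the convention `Ψ_{2,0} ≡ 0`.
(Potentials are indexed from `1` as in the paper; sites of configurations are indexed
from `0`, so `z ⟨k⟩` is the paper's `z_{k+1}`.) -/
theorem two_lag_gibbs_past_given_future_conditional
    {E : Type*} [Fintype E] [Nonempty E]
    (T : ℕ)
    (θ : ℕ → E → ℝ) (Ψ₁ Ψ₂ : ℕ → E → E → ℝ)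
    (hΨ₂0 : ∀ u v, Ψ₂ 0 u v = 0)
    (U : (t : ℕ) → (Fin t → E) → ℝ)
    (hU : ∀ (t : ℕ) (z : Fin t → E),
      U t z = (∑ s : Fin t, θ (s.1 + 1) (z s))
        + (∑ s : Fin (t - 1),
            Ψ₁ (s.1 + 1) (z ⟨s.1, by have := s.2; omega⟩)
              (z ⟨s.1 + 1, by have := s.2; omega⟩))
        + ∑ s : Fin (t - 2),
            Ψ₂ (s.1 + 1) (z ⟨s.1, by have := s.2; omega⟩)
              (z ⟨s.1 + 2, by have := s.2; omega⟩))
    (Ustar : (t : ℕ) → (Fin t → E) → E → E → ℝ)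
    (hUstar : ∀ (t : ℕ) (ht : 1 ≤ t) (z : Fin t → E) (a b : E),
      Ustar t z a b = U t z + Ψ₁ t (z ⟨t - 1, by omega⟩) a
        + Ψ₂ (t - 1) (z ⟨t - 2, by omega⟩) a + Ψ₂ t (z ⟨t - 1, by omega⟩) b)
    (C : ℝ) (hC : C = ∑ z : Fin T → E, Real.exp (U T z))
    (π : (Fin T → E) → ℝ) (hπ : ∀ z, π z = C⁻¹ * Real.exp (U T z)) :
    ∀ (t : ℕ) (ht1 : 1 ≤ t) (ht2 : t ≤ T - 2) (z : Fin T → E),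
      π z / (∑ u : Fin t → E,
          π (fun j : Fin T => if hj : j.1 < t then u ⟨j.1, hj⟩ else z j))
      = Real.exp (Ustar t (fun j : Fin t => z ⟨j.1, by have := j.2; omega⟩)
            (z ⟨t, by omega⟩) (z ⟨t + 1, by omega⟩))
        / ∑ u : Fin t → E,
            Real.exp (Ustar t u (z ⟨t, by omega⟩) (z ⟨t + 1, by omega⟩)) := by
  intro t ht1 ht2 z
  have hU_chain : ∀ n (w : Fin n → E) (ξ : ℕ → E), (∀ k (hk : k < n), ξ k = w ⟨k, hk⟩) →
      U n w = chainEnergy θ Ψ₁ Ψ₂ ξ 0 n := fun n w ξ hξ =>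
    (hU n w).trans (sum_fin_eq_chainEnergy θ Ψ₁ Ψ₂ w ξ hξ)
  have hUstar_sites : ∀ (u : Fin t → E) (ξ : ℕ → E), (∀ k (hk : k < t), ξ k = u ⟨k, hk⟩) →
      Ustar t u (ξ t) (ξ (t + 1)) = ∑ s ∈ Finset.range t, siteEnergy θ Ψ₁ Ψ₂ ξ s := by
    intro u ξ hξ
    rw [hUstar t ht1, hU_chain t u ξ hξ,
      ← chainEnergy_zero_add_boundary_eq_sum_siteEnergy θ Ψ₁ Ψ₂ hΨ₂0 ξ ht1,
      hξ (t - 1) (by omega), hξ (t - 2) (by omega)]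
  obtain ⟨R, hR⟩ := exists_energy_splice_eq_add θ Ψ₁ Ψ₂ (show t + 2 ≤ T by omega) (U T)
    (Ustar t) (hU_chain T) hUstar_sites z
  have hz : U T z = Ustar t (fun j : Fin t => z ⟨j.1, by have := j.2; omega⟩)
      (z ⟨t, by omega⟩) (z ⟨t + 1, by omega⟩) + R := by
    rw [← hR]; congr 1; funext j; split_ifs <;> rfl
  have hC0 : C ≠ 0 := by
    rw [hC]; exact (Finset.sum_pos (fun _ _ => Real.exp_pos _) Finset.univ_nonempty).ne'
  simp only [hπ, hz, hR]
  exact mul_exp_add_div_sum_mul_exp_add (inv_ne_zero hC0)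
    (fun u => Ustar t u (z ⟨t, by omega⟩) (z ⟨t + 1, by omega⟩)) R _
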